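/- arXiv:math/0406617 — 2 statements merged into one kernel-verified Lean document; each statement's English description precedes it below -/
import Mathlib

section
/- The content C_T of any standard tableau T on λ/μ^ satisfies: (C1) C_T(i+n) = C_T(i) - κ for all i, where κ = ℓ+m; and (C2) for every p ∈ ℤ and i < j in C_T^{-1}(p) with [i,j] ∩ C_T^{-1}(p) = {i,j}, there exist unique k_- ∈ C_T^{-1}(p-1) and unique k_+ ∈ C_T^{-1}(p+1) with i < k_- < j and i < k_+ < j. -/
/-- The periodic skew diagram `λ/μ^` attached to `(λ,μ)` (rows are indexed
`1,…,m`, with the `0`-indexed data `lam i = λ_{i+1}`, `mu i = μ_{i+1}`):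
`λ/μ^ = ⋃_{k∈ℤ} (λ/μ + k(m,-ℓ))`. -/
def hatD (m ℓ : ℕ) (lam mu : ℕ → ℤ) : Set (ℤ × ℤ) :=
  {p | ∃ (k : ℤ) (i : ℕ), i < m ∧ p.1 = (i : ℤ) + 1 + k * m ∧
        mu i + 1 ≤ p.2 + k * ℓ ∧ p.2 + k * ℓ ≤ lam i}

/-- `v ∈ P̂⁺_{m,ℓ}`: weakly decreasing with spread at most `ℓ`. -/
def isDom (m ℓ : ℕ) (v : ℕ → ℤ) : Prop :=
  (∀ i j : ℕ, i ≤ j → j < m → v j ≤ v i) ∧ v 0 - v (m - 1) ≤ (ℓ : ℤ)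

/-- `(λ,μ) ∈ 𝒥_{m,ℓ}`. -/
def memJ (n m ℓ : ℕ) (lam mu : ℕ → ℤ) : Prop :=
  1 ≤ m ∧ isDom m ℓ lam ∧ isDom m ℓ mu ∧ (∀ i < m, mu i ≤ lam i) ∧
    (∑ i ∈ Finset.range m, (lam i - mu i)) = (n : ℤ)

/-- `(λ,μ) ∈ 𝒥*_{m,ℓ}` (no empty rows: `λ_i > μ_i`). -/
def memJstar (n m ℓ : ℕ) (lam mu : ℕ → ℤ) : Prop :=
  1 ≤ m ∧ isDom m ℓ lam ∧ isDom m ℓ mu ∧ (∀ i < m, mu i < lam i) ∧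
    (∑ i ∈ Finset.range m, (lam i - mu i)) = (n : ℤ)

/-- A tableau on the (`(m,-ℓ)`-periodic) diagram `Λ`: a bijection `Λ → ℤ`
with `T(u + (m,-ℓ)) = T(u) + n`. -/
def IsTab (n m ℓ : ℕ) (Λ : Set (ℤ × ℤ)) (T : ℤ × ℤ → ℤ) : Prop :=
  Set.BijOn T Λ Set.univ ∧ ∀ u ∈ Λ, T (u + ((m : ℤ), -(ℓ : ℤ))) = T u + (n : ℤ)

/-- Row increasing. -/
def RowInc (Λ : Set (ℤ × ℤ)) (T : ℤ × ℤ → ℤ) : Prop :=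
  ∀ a b : ℤ, (a, b) ∈ Λ → (a, b + 1) ∈ Λ → T (a, b) < T (a, b + 1)

/-- Column increasing. -/
def ColInc (Λ : Set (ℤ × ℤ)) (T : ℤ × ℤ → ℤ) : Prop :=
  ∀ a b : ℤ, (a, b) ∈ Λ → (a + 1, b) ∈ Λ → T (a, b) < T (a + 1, b)

/-- A standard (row-column increasing) tableau. -/
def IsStdTab (n m ℓ : ℕ) (Λ : Set (ℤ × ℤ)) (T : ℤ × ℤ → ℤ) : Prop :=
  IsTab n m ℓ Λ T ∧ RowInc Λ T ∧ ColInc Λ T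

/-- `F` is the content function of the tableau `T`: `F(T(a,b)) = b - a`. -/
def IsContent (Λ : Set (ℤ × ℤ)) (T : ℤ × ℤ → ℤ) (F : ℤ → ℤ) : Prop :=
  ∀ u ∈ Λ, F (T u) = u.2 - u.1

/-!
Row `a` of `λ/μ^` is an interval whose two endpoints decrease weakly with `a`, so `λ/μ^` is
order-convex in `ℤ × ℤ` and a row- and column-increasing `T` is strictly monotone for the
componentwise order. The cells of content `p` form one diagonal, along which `T` increases, so two
consecutive entries of content `p` sit in cells `(a, a + p)` and `(a + 1, a + 1 + p)`. Of the cells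
of content `p ± 1`, only the corners `(a, a + p + 1)` and `(a + 1, a + p)` lie between them; every
other such cell is weakly north-west of the first or south-east of the second. (C1) is the
periodicity `T (u + (m, -ℓ)) = T u + n` read through the content.
-/

def hatBound (m ℓ : ℕ) (f : ℕ → ℤ) (a : ℤ) : ℤ :=
  f ((a - 1) % m).toNat - ((a - 1) / m) * ℓ

lemma mem_hatD_iff {m ℓ : ℕ} (hm : 1 ≤ m) {lam mu : ℕ → ℤ} {a b : ℤ} :
    (a, b) ∈ hatD m ℓ lam mu ↔ hatBound m ℓ mu a < b ∧ b ≤ hatBound m ℓ lam a := by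
  have hm' : (0 : ℤ) < m := by exact_mod_cast hm
  constructor
  · rintro ⟨k, i, hi, ha, hmu, hlam⟩
    obtain ⟨hq, hr⟩ := (Int.ediv_emod_unique hm').2
      (⟨by simp only at ha; linarith, by positivity, by exact_mod_cast hi⟩ :
        (i : ℤ) + m * k = a - 1 ∧ _ ∧ _)
    simp only [hatBound, hq, hr, Int.toNat_natCast]
    constructor <;> linarith
  · rintro ⟨hmu, hlam⟩
    simp only [hatBound] at hmu hlam
    have hr := Int.emod_nonneg (a - 1) hm'.ne'
    have hr' := Int.emod_lt_of_pos (a - 1) hm'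
    have hqr := Int.mul_ediv_add_emod (a - 1) m
    refine ⟨(a - 1) / m, ((a - 1) % m).toNat, by omega, ?_, ?_, ?_⟩ <;>
      simp only [Int.toNat_of_nonneg hr] <;> linarith

lemma hatBound_succ_le {m ℓ : ℕ} (hm : 1 ≤ m) {f : ℕ → ℤ} (hf : isDom m ℓ f) (a : ℤ) :
    hatBound m ℓ f (a + 1) ≤ hatBound m ℓ f a := by
  have hm' : (0 : ℤ) < m := by exact_mod_cast hm
  have hr := Int.emod_nonneg (a - 1) hm'.ne'
  have hr' := Int.emod_lt_of_pos (a - 1) hm'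
  have hqr := Int.mul_ediv_add_emod (a - 1) m
  simp only [hatBound, add_sub_cancel_right]
  rcases lt_or_eq_of_le (show (a - 1) % m + 1 ≤ m by omega) with hlt | heq
  · -- `a` and `a - 1` lie in the same block of `m` rows
    obtain ⟨hq, hr₁⟩ := (Int.ediv_emod_unique hm' (a := a) (q := (a - 1) / m)).2
      ⟨by linarith, by omega, hlt⟩
    rw [hq, hr₁]
    linarith [hf.1 ((a - 1) % m).toNat ((a - 1) % m + 1).toNat (by omega) (by omega)]
  · -- `a - 1` is the last row of its block, `a` the first row of the next one
    obtain ⟨hq, hr₁⟩ := (Int.ediv_emod_unique hm' (a := a) (q := (a - 1) / m + 1)).2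
      ⟨by linarith, le_rfl, hm'⟩
    rw [hq, hr₁, show ((a - 1) % m).toNat = m - 1 by omega]
    push_cast
    linarith [hf.2]

lemma antitone_hatBound {m ℓ : ℕ} (hm : 1 ≤ m) {f : ℕ → ℤ} (hf : isDom m ℓ f) :
    Antitone (hatBound m ℓ f) :=
  antitone_int_of_succ_le (hatBound_succ_le hm hf)

lemma ordConnected_hatD {m ℓ : ℕ} (hm : 1 ≤ m) {lam mu : ℕ → ℤ} (hlam : isDom m ℓ lam)
    (hmu : isDom m ℓ mu) : (hatD m ℓ lam mu).OrdConnected := by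
  refine ⟨fun ⟨a, b⟩ hu ⟨c, d⟩ hv ⟨x, y⟩ ⟨hux, hxv⟩ => ?_⟩
  rw [Prod.mk_le_mk] at hux hxv
  rw [mem_hatD_iff hm] at hu hv ⊢
  exact ⟨(antitone_hatBound hm hmu hux.1).trans_lt (hu.1.trans_le hux.2),
    hxv.2.trans (hv.2.trans (antitone_hatBound hm hlam hxv.1))⟩

lemma add_mem_hatD {m ℓ : ℕ} {lam mu : ℕ → ℤ} {u : ℤ × ℤ} (hu : u ∈ hatD m ℓ lam mu) :
    u + ((m : ℤ), -(ℓ : ℤ)) ∈ hatD m ℓ lam mu := by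
  obtain ⟨k, i, hi, ha, hmu, hlam⟩ := hu
  refine ⟨k + 1, i, hi, ?_, ?_, ?_⟩ <;> simp only [Prod.fst_add, Prod.snd_add] <;> linarith

section Tableau

variable {s : Set (ℤ × ℤ)} {T : ℤ × ℤ → ℤ} {F : ℤ → ℤ}

lemma strictMonoOn_of_rowInc_colInc (hs : s.OrdConnected) (hrow : RowInc s T)
    (hcol : ColInc s T) : StrictMonoOn T s := by
  have row : ∀ a, StrictMonoOn (fun b => T (a, b)) ((fun b => (a, b)) ⁻¹' s) := fun a =>
    strictMonoOn_of_lt_add_one (hs.preimage_mono fun _ _ h => ⟨le_rfl, h⟩)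
      fun b _ hb hb' => hrow a b hb hb'
  have col : ∀ b, StrictMonoOn (fun a => T (a, b)) ((fun a => (a, b)) ⁻¹' s) := fun b =>
    strictMonoOn_of_lt_add_one (hs.preimage_mono fun _ _ h => ⟨h, le_rfl⟩)
      fun a _ ha ha' => hcol a b ha ha'
  rintro ⟨a, b⟩ hu ⟨c, d⟩ hv huv
  have hcorner : (a, d) ∈ s := hs.out hu hv ⟨⟨le_rfl, huv.le.2⟩, ⟨huv.le.1, le_rfl⟩⟩
  rcases Prod.mk_lt_mk.1 huv with ⟨hac, hbd⟩ | ⟨hac, hbd⟩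
  · exact ((row a).monotoneOn hu hcorner hbd).trans_lt (col d hcorner hv hac)
  · exact (row a hu hcorner hbd).trans_le ((col d).monotoneOn hcorner hv hac)

lemma IsContent.add_period {n m ℓ : ℕ} (hshift : ∀ u ∈ s, u + ((m : ℤ), -(ℓ : ℤ)) ∈ s)
    (hT : IsTab n m ℓ s T) (hF : IsContent s T F) (i : ℤ) :
    F (i + n) = F i - (ℓ + m) := by
  obtain ⟨u, hu, rfl⟩ := hT.1.surjOn (Set.mem_univ i)
  rw [← hT.2 u hu, hF _ (hshift u hu), hF u hu, Prod.snd_add, Prod.fst_add]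
  ring

lemma IsContent.exists_cell (hF : IsContent s T F) (hsurj : Set.SurjOn T s Set.univ) (k : ℤ) :
    ∃ a, (a, a + F k) ∈ s ∧ T (a, a + F k) = k := by
  obtain ⟨⟨a, b⟩, hu, rfl⟩ := hsurj (Set.mem_univ k)
  have hb : b = a + F (T (a, b)) := by rw [hF _ hu]; ring
  exact ⟨a, hb ▸ hu, by rw [← hb]⟩

lemma IsContent.row_succ_of_consecutive (hF : IsContent s T F) (hs : s.OrdConnected)
    (hT : StrictMonoOn T s) {a c p : ℤ} (hu : (a, a + p) ∈ s)
    (hv : (c, c + p) ∈ s) (hlt : T (a, a + p) < T (c, c + p))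
    (hgap : ∀ k, T (a, a + p) < k → k < T (c, c + p) → F k ≠ p) : c = a + 1 := by
  have hac : a < c := by
    by_contra! hca
    exact hlt.not_ge (hT.monotoneOn hv hu (Prod.mk_le_mk.2 ⟨hca, by omega⟩))
  by_contra! hne
  have hw : (a + 1, a + 1 + p) ∈ s :=
    hs.out hu hv ⟨Prod.mk_le_mk.2 ⟨by omega, by omega⟩, Prod.mk_le_mk.2 ⟨by omega, by omega⟩⟩
  refine hgap _ (hT hu hw (Prod.mk_lt_mk.2 (Or.inl ⟨by omega, by omega⟩)))
    (hT hw hv (Prod.mk_lt_mk.2 (Or.inl ⟨by omega, by omega⟩))) ?_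
  rw [hF _ hw]
  ring

lemma IsContent.existsUnique_between (hF : IsContent s T F) (hs : s.OrdConnected)
    (hT : StrictMonoOn T s) (hsurj : Set.SurjOn T s Set.univ) {a p q x : ℤ}
    (hu : (a, a + p) ∈ s) (hv : (a + 1, a + 1 + p) ∈ s)
    (hx : x = a ∧ q = p + 1 ∨ x = a + 1 ∧ q = p - 1) :
    ∃! k, T (a, a + p) < k ∧ k < T (a + 1, a + 1 + p) ∧ F k = q := by
  have hw : (x, x + q) ∈ s :=
    hs.out hu hv ⟨Prod.mk_le_mk.2 ⟨by omega, by omega⟩, Prod.mk_le_mk.2 ⟨by omega, by omega⟩⟩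
  refine ⟨T (x, x + q), ⟨hT hu hw (lt_of_le_of_ne (Prod.mk_le_mk.2 ⟨by omega, by omega⟩) ?_),
    hT hw hv (lt_of_le_of_ne (Prod.mk_le_mk.2 ⟨by omega, by omega⟩) ?_), by rw [hF _ hw]; ring⟩,
    ?_⟩
  · simp only [ne_eq, Prod.mk.injEq]; omega
  · simp only [ne_eq, Prod.mk.injEq]; omega
  rintro k ⟨hik, hkj, hk⟩
  obtain ⟨y, hy, rfl⟩ : ∃ y, (y, y + q) ∈ s ∧ T (y, y + q) = k := hk ▸ hF.exists_cell hsurj k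
  have h₁ : ¬(y ≤ a ∧ y + q ≤ a + p) := fun h =>
    hik.not_ge (hT.monotoneOn hy hu (Prod.mk_le_mk.2 h))
  have h₂ : ¬(a + 1 ≤ y ∧ a + 1 + p ≤ y + q) := fun h =>
    hkj.not_ge (hT.monotoneOn hv hy (Prod.mk_le_mk.2 h))
  obtain rfl : y = x := by omega
  rfl

lemma IsContent.existsUnique_between_consecutive (hF : IsContent s T F)
    (hs : s.OrdConnected) (hT : StrictMonoOn T s) (hsurj : Set.SurjOn T s Set.univ)
    {p i j : ℤ} (hij : i < j) (hi : F i = p) (hj : F j = p)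
    (hgap : ∀ k, i < k → k < j → F k ≠ p) :
    (∃! k, i < k ∧ k < j ∧ F k = p - 1) ∧ (∃! k, i < k ∧ k < j ∧ F k = p + 1) := by
  obtain ⟨a, hu, rfl⟩ : ∃ a, (a, a + p) ∈ s ∧ T (a, a + p) = i := hi ▸ hF.exists_cell hsurj i
  obtain ⟨c, hv, rfl⟩ : ∃ c, (c, c + p) ∈ s ∧ T (c, c + p) = j := hj ▸ hF.exists_cell hsurj j
  obtain rfl := hF.row_succ_of_consecutive hs hT hu hv hij hgap
  exact ⟨hF.existsUnique_between hs hT hsurj hu hv (Or.inr ⟨rfl, rfl⟩),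
    hF.existsUnique_between hs hT hsurj hu hv (Or.inl ⟨rfl, rfl⟩)⟩

end Tableau

theorem std_content_C1C2_general (n m ℓ : ℕ) (lam mu : ℕ → ℤ)
    (hJ : memJ n m ℓ lam mu)
    (T : ℤ × ℤ → ℤ) (hT : IsStdTab n m ℓ (hatD m ℓ lam mu) T)
    (F : ℤ → ℤ) (hF : IsContent (hatD m ℓ lam mu) T F) :
    (∀ i : ℤ, F (i + (n : ℤ)) = F i - ((ℓ : ℤ) + (m : ℤ))) ∧
    (∀ p i j : ℤ, i < j → F i = p → F j = p → (∀ k : ℤ, i < k → k < j → F k ≠ p) →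
      (∃! k : ℤ, i < k ∧ k < j ∧ F k = p - 1) ∧
      (∃! k : ℤ, i < k ∧ k < j ∧ F k = p + 1)) := by
  obtain ⟨hm, hlam, hmu, -, -⟩ := hJ
  obtain ⟨hTab, hrow, hcol⟩ := hT
  have hs := ordConnected_hatD hm hlam hmu
  exact ⟨hF.add_period (fun _ => add_mem_hatD) hTab,
    fun _ _ _ => hF.existsUnique_between_consecutive hs
      (strictMonoOn_of_rowInc_colInc hs hrow hcol) hTab.1.surjOn⟩

/-- the content `F = C_T` of a standard tableau `T` on `λ/μ^`
satisfies (C1) `F(i+n) = F(i) - κ` with `κ = ℓ + m`, and (C2): whenever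
`i < j`, `F(i) = F(j) = p` and no `k` strictly between `i` and `j` has
`F(k) = p`, there exist a unique `k₋` with `i < k₋ < j`, `F(k₋) = p - 1`, and a
unique `k₊` with `i < k₊ < j`, `F(k₊) = p + 1`. -/
theorem std_content_C1C2 (n m ℓ : ℕ) (hn : 2 ≤ n) (lam mu : ℕ → ℤ)
    (hJ : memJ n m ℓ lam mu)
    (T : ℤ × ℤ → ℤ) (hT : IsStdTab n m ℓ (hatD m ℓ lam mu) T)
    (F : ℤ → ℤ) (hF : IsContent (hatD m ℓ lam mu) T F) :
    (∀ i : ℤ, F (i + (n : ℤ)) = F i - ((ℓ : ℤ) + (m : ℤ))) ∧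
    (∀ p i j : ℤ, i < j → F i = p → F j = p → (∀ k : ℤ, i < k → k < j → F k ≠ p) →
      (∃! k : ℤ, i < k ∧ k < j ∧ F k = p - 1) ∧
      (∃! k : ℤ, i < k ∧ k < j ∧ F k = p + 1)) :=
  std_content_C1C2_general n m ℓ lam mu hJ T hT F hF
end

section
/- For (λ,μ) ∈ J*_{m,ℓ} and (η,ν) ∈ J*_{m',ℓ'}, the following are equivalent: (a) C_T = C_S for some standard tableaux T on λ/μ^ and S on η/ν^; (b) m = m', ℓ = ℓ', and λ/μ^ = η/ν^ + (r,r) for some r ∈ ℤ; (c) m = m', ℓ = ℓ', and (η,ν) = ω_m^r·(λ,μ) for some r ∈ ℤ. -/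
/-- The diagonal-shift automorphism `ω_m` of `ℤ^m` (depending on `ℓ`):
`ω_m·λ = (λ_m + ℓ + 1, λ_1 + 1, …, λ_{m-1} + 1)` (`0`-indexed; only the
values at indices `< m` are relevant). -/
def omegaMap (m ℓ : ℕ) (v : ℕ → ℤ) : ℕ → ℤ := fun i =>
  if i = 0 then v (m - 1) + (ℓ : ℤ) + 1 else v (i - 1) + 1

/-!
Model `λ/μ^` as the cells `(a, b)` with `inner a < b ≤ outer a`, where `inner` and `outer` are
antitone. In a standard filling the entries increase along each diagonal `b - a = d`, which
occupies an interval of rows `[first d, last d]`; so the entry `t` sits in row `first (C t)` plus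
the number of smaller entries of the same content. For two standard fillings with the same content
function it remains to see that `first` changes by the same amount in both diagrams between
consecutive contents `d < e`: for `e = d + 1` it drops by one exactly when the smallest entry of
content `d + 1` precedes all entries of content `d`, and across a gap it drops by the number of
entries of content `e`. The periodicity of the content function gives `m + ℓ = m' + ℓ'`; the outer
boundary then has both periods, which forces `m = m'`.

Conversely the row reading filling is a standard tableau, its translates are standard tableaux
with the same content function, and `ω` acts on `λ/μ^` as the translation by `(1, 1)`.
-/

open Set Function

lemma eq_of_eq_of_consecutive {α : Type*} {S : Set ℤ} {g : ℤ → α}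
    (h : ∀ d ∈ S, ∀ e ∈ S, d < e → (∀ x ∈ S, x ≤ d ∨ e ≤ x) → g d = g e)
    {d e : ℤ} (hd : d ∈ S) (he : e ∈ S) : g d = g e := by
  wlog hde : d ≤ e generalizing d e
  · exact (this he hd (le_of_not_ge hde)).symm
  induction hn : (e - d).toNat using Nat.strong_induction_on generalizing d with
  | _ n ih =>
  rcases hde.eq_or_lt with rfl | hlt
  · rfl
  obtain ⟨x, ⟨hxS, hdx, hxe⟩, hxmin⟩ := Int.exists_least_of_bdd
    (P := fun x => x ∈ S ∧ d < x ∧ x ≤ e) ⟨d, fun x hx => hx.2.1.le⟩ ⟨e, he, hlt, le_rfl⟩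
  have hnext : g d = g x := h d hd x hxS hdx fun y hy => by
    by_contra! hy'
    exact absurd (hxmin y ⟨hy, hy'.1, by omega⟩) (by omega)
  exact hnext.trans (ih _ (by omega) hxS hxe rfl)

noncomputable def diagThreshold (f : ℤ → ℤ) (d : ℤ) : ℤ := sInf {a | f a - a < d}

lemma diagThreshold_le_iff {f : ℤ → ℤ} (hf : Antitone f) {d a : ℤ} :
    diagThreshold f d ≤ a ↔ f a - a < d := by
  have hray : ∀ {a b}, a ≤ b → f a - a < d → f b - b < d := fun hab h => by
    have := hf hab; omega
  have hne : {a | f a - a < d}.Nonempty :=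
    ⟨max 0 (f 0 - d + 1), by
      have := hf (le_max_left 0 (f 0 - d + 1))
      simp only [mem_ofPred_eq]
      omega⟩
  have hbdd : BddBelow {a | f a - a < d} := ⟨min 0 (f 0 - d), fun a ha => by
    by_contra! h
    have := hf (h.le.trans (min_le_left _ _))
    simp only [mem_ofPred_eq] at ha
    omega⟩
  exact ⟨fun h => hray h (Int.csInf_mem hne hbdd), fun h => csInf_le hbdd h⟩

structure SkewDiagram where
  inner : ℤ → ℤ
  outer : ℤ → ℤ
  antitone_inner : Antitone inner
  antitone_outer : Antitone outer
  inner_lt_outer : ∀ a, inner a < outer a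

namespace SkewDiagram

variable (E : SkewDiagram)

def cells : Set (ℤ × ℤ) := {p | E.inner p.1 < p.2 ∧ p.2 ≤ E.outer p.1}

/-- The first row meeting the diagonal `b - a = d`. -/
noncomputable def first (d : ℤ) : ℤ := diagThreshold E.inner d

/-- The last row meeting the diagonal `b - a = d`. -/
noncomputable def last (d : ℤ) : ℤ := diagThreshold E.outer d - 1

variable {E} {a d e : ℤ}

lemma first_le_iff : E.first d ≤ a ↔ E.inner a - a < d :=
  diagThreshold_le_iff E.antitone_inner

lemma le_last_iff : a ≤ E.last d ↔ d ≤ E.outer a - a := by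
  rw [last, Int.le_sub_one_iff, ← not_le, diagThreshold_le_iff E.antitone_outer, not_lt]

lemma mk_add_mem_cells_iff : (a, a + d) ∈ E.cells ↔ a ∈ Icc (E.first d) (E.last d) := by
  simp only [cells, mem_ofPred_eq, mem_Icc, first_le_iff, le_last_iff]
  omega

lemma mem_cells_iff {p : ℤ × ℤ} :
    p ∈ E.cells ↔ p.1 ∈ Icc (E.first (p.2 - p.1)) (E.last (p.2 - p.1)) := by
  rw [← mk_add_mem_cells_iff, add_sub_cancel]

lemma first_antitone : Antitone E.first := fun _ _ hde =>
  first_le_iff.2 ((first_le_iff.1 le_rfl).trans_le hde)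

lemma last_antitone : Antitone E.last := fun _ _ hde =>
  le_last_iff.2 (hde.trans (le_last_iff.1 le_rfl))

lemma first_sub_one_le_first_succ (d : ℤ) : E.first d - 1 ≤ E.first (d + 1) := by
  by_contra! h
  have h1 := first_le_iff.1 (show E.first (d + 1) ≤ E.first d - 2 by omega)
  have h2 : ¬ E.inner (E.first d - 1) - (E.first d - 1) < d := fun h => by
    have := first_le_iff.2 h; omega
  have := E.antitone_inner (show E.first d - 2 ≤ E.first d - 1 by omega)
  omega

lemma first_eq_last_add_one (hde : d + 1 < e)
    (hgap : ∀ p ∈ E.cells, p.2 - p.1 ≤ d ∨ e ≤ p.2 - p.1) : E.first d = E.last e + 1 := by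
  set a := E.last e
  have hout : e ≤ E.outer a - a := le_last_iff.1 le_rfl
  have hout' : E.outer (a + 1) - (a + 1) < e := by
    by_contra! h
    have := le_last_iff.2 h
    omega
  apply le_antisymm
  · have hrow := hgap (a + 1, E.outer (a + 1)) ⟨E.inner_lt_outer _, le_rfl⟩
    have := E.inner_lt_outer (a + 1)
    exact first_le_iff.2 (by simp only at hrow; omega)
  · by_contra! h
    have hin := first_le_iff.1 (show E.first d ≤ a by omega)
    have := hgap (a, a + (d + 1)) ⟨by simp only; omega, by simp only; omega⟩
    simp only at this
    omega

variable {F : SkewDiagram} {r : ℤ}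

lemma outer_eq_of_cells_eq_image_add (h : F.cells = (· + (r, r)) '' E.cells) (a : ℤ) :
    F.outer a = E.outer (a - r) + r := by
  have hrow : Ioc (F.inner a) (F.outer a) = Ioc (E.inner (a - r) + r) (E.outer (a - r) + r) := by
    ext b
    have := congrArg ((a, b) ∈ ·) h
    simp only [image_add_right, cells, mem_preimage, mem_ofPred_eq, Prod.fst_add, Prod.snd_add,
      Prod.neg_mk, eq_iff_iff] at this
    simp only [mem_Ioc, this, ← sub_eq_add_neg]
    omega
  exact ((Ioc_eq_Ioc_iff (.inl (F.inner_lt_outer a))).1 hrow).2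

structure IsStdFilling (E : SkewDiagram) (T : ℤ × ℤ → ℤ) (C : ℤ → ℤ) : Prop where
  bijOn : BijOn T E.cells univ
  rowInc : RowInc E.cells T
  colInc : ColInc E.cells T
  content : IsContent E.cells T C

variable {T S : ℤ × ℤ → ℤ} {C : ℤ → ℤ} {s : ℤ}

namespace IsStdFilling

variable (hT : E.IsStdFilling T C)
include hT

lemma content_mk_add (h : a ∈ Icc (E.first d) (E.last d)) : C (T (a, a + d)) = d := by
  rw [hT.content _ (mk_add_mem_cells_iff.2 h), add_sub_cancel_left]

lemma exists_mk_add_eq (hs : C s = d) : ∃ a ∈ Icc (E.first d) (E.last d), T (a, a + d) = s := by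
  obtain ⟨p, hp, rfl⟩ := hT.bijOn.surjOn (mem_univ s)
  rw [← hs, hT.content p hp]
  exact ⟨p.1, mem_cells_iff.1 hp, by rw [add_sub_cancel]⟩

lemma mem_range_iff : d ∈ range C ↔ E.first d ≤ E.last d := by
  refine ⟨?_, fun h => ⟨_, hT.content_mk_add ⟨le_rfl, h⟩⟩⟩
  rintro ⟨t, ht⟩
  obtain ⟨a, ha, -⟩ := hT.exists_mk_add_eq ht
  exact ha.1.trans ha.2

lemma strictMonoOn_diag (d : ℤ) :
    StrictMonoOn (fun a => T (a, a + d)) (Icc (E.first d) (E.last d)) := by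
  refine strictMonoOn_of_lt_succ ordConnected_Icc fun a _ ha ha1 => ?_
  rw [Order.succ_eq_add_one] at ha1 ⊢
  have hcell := mk_add_mem_cells_iff.2 ha
  have hcell1 := mk_add_mem_cells_iff.2 ha1
  rw [add_right_comm] at hcell1 ⊢
  have hright : (a, a + d + 1) ∈ E.cells := by
    have := E.antitone_outer (le_add_of_nonneg_right zero_le_one (a := a))
    exact ⟨by have := hcell.1; simp only at this ⊢; omega,
      by have := hcell1.2; simp only at this ⊢; omega⟩
  calc T (a, a + d) < T (a, a + d + 1) := hT.rowInc _ _ hcell hright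
    _ < T (a + 1, a + d + 1) := hT.colInc _ _ hright hcell1

lemma setOf_content_eq_lt (ha : a ∈ Icc (E.first d) (E.last d)) :
    {s | C s = d ∧ s < T (a, a + d)} = (fun b => T (b, b + d)) '' Ico (E.first d) a := by
  have hmono := hT.strictMonoOn_diag d
  ext s
  constructor
  · rintro ⟨hs, hlt⟩
    obtain ⟨b, hb, rfl⟩ := hT.exists_mk_add_eq hs
    exact ⟨b, ⟨hb.1, (hmono.lt_iff_lt hb ha).1 hlt⟩, rfl⟩
  · rintro ⟨b, hb, rfl⟩
    have hb' : b ∈ Icc (E.first d) (E.last d) := ⟨hb.1, hb.2.le.trans ha.2⟩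
    exact ⟨hT.content_mk_add hb', hmono hb' ha hb.2⟩

lemma ncard_setOf_content_eq_lt (ha : a ∈ Icc (E.first d) (E.last d)) :
    ({s | C s = d ∧ s < T (a, a + d)}.ncard : ℤ) = a - E.first d := by
  have hinj := (hT.strictMonoOn_diag d).injOn.mono
    (Ico_subset_Icc_self.trans (Icc_subset_Icc_right ha.2))
  rw [hT.setOf_content_eq_lt ha, hinj.ncard_image, ← Finset.coe_Ico, ncard_coe_finset,
    Int.card_Ico_of_le _ _ ha.1]

lemma ncard_setOf_content_eq (h : E.first d ≤ E.last d) :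
    ({s | C s = d}.ncard : ℤ) = E.last d + 1 - E.first d := by
  have hs : {s | C s = d} = (fun b => T (b, b + d)) '' Icc (E.first d) (E.last d) := by
    ext s
    refine ⟨hT.exists_mk_add_eq, ?_⟩
    rintro ⟨b, hb, rfl⟩
    exact hT.content_mk_add hb
  rw [hs, (hT.strictMonoOn_diag d).injOn.ncard_image, ← Finset.coe_Icc, ncard_coe_finset,
    Int.card_Icc_of_le _ _ (by omega)]

lemma fst_eq_first_add_ncard {u : ℤ × ℤ} (hu : u ∈ E.cells) :
    u.1 = E.first (C (T u)) + {s | C s = C (T u) ∧ s < T u}.ncard := by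
  have hc := hT.content u hu
  have := hT.ncard_setOf_content_eq_lt (mem_cells_iff.1 hu)
  rw [add_sub_cancel] at this
  rw [hc, this]
  ring

lemma first_succ_lt_iff (hd : d ∈ range C) (hd1 : d + 1 ∈ range C) :
    E.first (d + 1) < E.first d ↔ ∃ t, C t = d + 1 ∧ ∀ s, C s = d → t < s := by
  rw [hT.mem_range_iff] at hd hd1
  have hmono := hT.strictMonoOn_diag d
  have hsucc := E.first_sub_one_le_first_succ d
  constructor
  · intro hlt
    set a := E.first d
    have habove : (a - 1, a + d) ∈ E.cells := by
      have := mk_add_mem_cells_iff.2 (show a - 1 ∈ Icc (E.first (d + 1)) (E.last (d + 1)) by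
        constructor <;> omega)
      rwa [show a - 1 + (d + 1) = a + d by ring] at this
    refine ⟨T (a - 1, a + d), by rw [hT.content _ habove]; ring, fun s hs => ?_⟩
    obtain ⟨b, hb, rfl⟩ := hT.exists_mk_add_eq hs
    calc T (a - 1, a + d) < T (a, a + d) := by
          simpa using hT.colInc _ _ habove (by simpa using mk_add_mem_cells_iff.2 ⟨le_rfl, hd⟩)
      _ ≤ T (b, b + d) := hmono.monotoneOn ⟨le_rfl, hd⟩ hb hb.1
  · rintro ⟨t, ht, hmin⟩
    by_contra! hge
    obtain ⟨b, hb, rfl⟩ := hT.exists_mk_add_eq ht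
    have hb' : b ∈ Icc (E.first d) (E.last d) :=
      ⟨hge.trans hb.1, hb.2.trans (E.last_antitone (le_add_of_nonneg_right zero_le_one))⟩
    have hcell := mk_add_mem_cells_iff.2 hb'
    have hright := mk_add_mem_cells_iff.2 hb
    rw [← add_assoc] at hright
    have := hT.rowInc _ _ hcell hright
    have := hmin _ (hT.content_mk_add hb')
    rw [← add_assoc] at this
    omega

end IsStdFilling

lemma first_sub_first_eq_of_consecutive (hT : E.IsStdFilling T C) (hS : F.IsStdFilling S C)
    (hd : d ∈ range C) (he : e ∈ range C) (hde : d < e)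
    (hcons : ∀ x ∈ range C, x ≤ d ∨ e ≤ x) : F.first d - E.first d = F.first e - E.first e := by
  rcases (show e = d + 1 ∨ d + 1 < e by omega) with rfl | hgap
  · have hE := hT.first_succ_lt_iff hd he
    have hF := hS.first_succ_lt_iff hd he
    have := E.first_sub_one_le_first_succ d
    have := F.first_sub_one_le_first_succ d
    have := E.first_antitone (le_add_of_nonneg_right zero_le_one (a := d))
    have := F.first_antitone (le_add_of_nonneg_right zero_le_one (a := d))
    by_cases h : ∃ t, C t = d + 1 ∧ ∀ s, C s = d → t < s
    · have := hE.2 h; have := hF.2 h; omega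
    · have := mt hE.1 h; have := mt hF.1 h; omega
  · have hE := E.first_eq_last_add_one hgap fun p hp => hcons _ ⟨T p, hT.content p hp⟩
    have hF := F.first_eq_last_add_one hgap fun p hp => hcons _ ⟨S p, hS.content p hp⟩
    have hcardE := hT.ncard_setOf_content_eq (hT.mem_range_iff.1 he)
    have hcardF := hS.ncard_setOf_content_eq (hS.mem_range_iff.1 he)
    omega

theorem exists_cells_eq_image_add (hT : E.IsStdFilling T C) (hS : F.IsStdFilling S C) :
    ∃ r : ℤ, F.cells = (· + (r, r)) '' E.cells := by
  set r := F.first (C 0) - E.first (C 0)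
  have hr : ∀ d ∈ range C, F.first d - E.first d = r := fun d hd =>
    eq_of_eq_of_consecutive (g := fun d => F.first d - E.first d)
      (fun d hd e he hde hcons => first_sub_first_eq_of_consecutive hT hS hd he hde hcons)
      hd ⟨0, rfl⟩
  have hcell : ∀ u ∈ E.cells, ∀ u' ∈ F.cells, T u = S u' → u' = u + (r, r) := by
    intro u hu u' hu' h
    have hrow := hT.fst_eq_first_add_ncard hu
    have hrow' := hS.fst_eq_first_add_ncard hu'
    have hc := hT.content u hu
    have hc' := hS.content u' hu'
    have hshift := hr _ ⟨T u, rfl⟩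
    rw [← h] at hrow' hc'
    refine Prod.ext ?_ ?_ <;> simp only [Prod.fst_add, Prod.snd_add] <;> omega
  refine ⟨r, Set.ext fun u' => ⟨fun hu' => ?_, ?_⟩⟩
  · obtain ⟨u, hu, h⟩ := hT.bijOn.surjOn (mem_univ (S u'))
    exact ⟨u, hu, (hcell u hu u' hu' h).symm⟩
  · rintro ⟨u, hu, rfl⟩
    show u + (r, r) ∈ F.cells
    obtain ⟨u', hu', h⟩ := hS.bijOn.surjOn (mem_univ (T u))
    exact hcell u hu u' hu' h.symm ▸ hu'

/-- Fill the rows one after the other, left to right, the row `a` starting after the value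
`σ a`. -/
def readingFilling (E : SkewDiagram) (σ : ℤ → ℤ) (p : ℤ × ℤ) : ℤ := σ p.1 + (p.2 - E.inner p.1)

variable {σ : ℤ → ℤ}

lemma readingFilling_rowInc : RowInc E.cells (E.readingFilling σ) := fun a b _ _ => by
  simp only [readingFilling]
  omega

lemma readingFilling_colInc (hS : ∀ a, σ (a + 1) = σ a + (E.outer a - E.inner a)) :
    ColInc E.cells (E.readingFilling σ) := fun a b _ _ => by
  have := E.antitone_inner (le_add_of_nonneg_right zero_le_one (a := a))
  have := E.inner_lt_outer a
  simp only [readingFilling, hS]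
  omega

lemma readingFilling_bijOn (hS : ∀ a, σ (a + 1) = σ a + (E.outer a - E.inner a)) :
    BijOn (E.readingFilling σ) E.cells univ := by
  have hmono : StrictMono σ := strictMono_int_of_lt_succ fun a => by
    have := E.inner_lt_outer a; rw [hS]; omega
  refine ⟨mapsTo_univ _ _, ?_, ?_⟩
  · have hrow : ∀ p ∈ E.cells, ∀ q ∈ E.cells, p.1 < q.1 →
        E.readingFilling σ p < E.readingFilling σ q := fun p hp q hq hpq => by
      have := hmono.monotone (show p.1 + 1 ≤ q.1 by omega)
      have := hp.2; have := hq.1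
      simp only [readingFilling, hS] at *
      omega
    intro p hp q hq h
    rcases lt_trichotomy p.1 q.1 with hlt | heq | hgt
    · exact absurd h (hrow p hp q hq hlt).ne
    · simp only [readingFilling, heq] at h
      exact Prod.ext heq (by omega)
    · exact absurd h (hrow q hq p hp hgt).ne'
  · -- the values are closed under `± 1`: a row ends one below where the next one starts
    intro t _
    refine Int.inductionOn' t (E.readingFilling σ (0, E.outer 0))
      ⟨_, ⟨E.inner_lt_outer 0, le_rfl⟩, rfl⟩ ?_ ?_
    · rintro _ - ⟨⟨a, b⟩, ⟨hlo, hhi⟩, rfl⟩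
      simp only at hlo hhi
      rcases hhi.lt_or_eq with hlt | rfl
      · exact ⟨(a, b + 1), ⟨by simp only; omega, by simp only; omega⟩,
          by simp only [readingFilling]; ring⟩
      · exact ⟨(a + 1, E.inner (a + 1) + 1), ⟨by simp only; omega,
          by simpa using E.inner_lt_outer (a + 1)⟩, by simp only [readingFilling, hS]; ring⟩
    · rintro _ - ⟨⟨a, b⟩, ⟨hlo, hhi⟩, rfl⟩
      simp only at hlo hhi
      rcases (show E.inner a + 1 < b ∨ b = E.inner a + 1 by omega) with hlt | rfl
      · exact ⟨(a, b - 1), ⟨by simp only; omega, by simp only; omega⟩,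
          by simp only [readingFilling]; ring⟩
      · refine ⟨(a - 1, E.outer (a - 1)), ⟨E.inner_lt_outer _, le_rfl⟩, ?_⟩
        have := hS (a - 1)
        simp only [readingFilling, sub_add_cancel] at this ⊢
        omega

end SkewDiagram

/-- The extension of `v` from the rows `1, …, m` to all rows, gaining `c` per period. -/
def periodicExtend (m : ℕ) (c : ℤ) (v : ℕ → ℤ) (a : ℤ) : ℤ :=
  v ((a - 1) % m).toNat + (a - 1) / m * c

section periodicExtend

variable {m : ℕ} {c : ℤ} {v : ℕ → ℤ} {i : ℕ}

lemma periodicExtend_apply (hi : i < m) (k : ℤ) :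
    periodicExtend m c v (i + 1 + k * m) = v i + k * c := by
  have hm : (0 : ℤ) < m := by omega
  rw [periodicExtend, show (i : ℤ) + 1 + k * m - 1 = i + m * k by ring,
    Int.add_mul_emod_self_left, Int.emod_eq_of_lt (by omega) (by omega),
    Int.add_mul_ediv_left _ _ hm.ne', Int.ediv_eq_zero_of_lt (by omega) (by omega), zero_add,
    Int.toNat_natCast]

lemma periodicExtend_natCast_add_one (hi : i < m) : periodicExtend m c v (i + 1) = v i := by
  simpa using periodicExtend_apply (c := c) (v := v) hi 0

lemma periodicExtend_add_one (hi : i < m) (k : ℤ) :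
    periodicExtend m c v (i + 1 + k * m + 1) =
      if i + 1 < m then v (i + 1) + k * c else v 0 + (k + 1) * c := by
  split_ifs with h
  · rw [← periodicExtend_apply h]
    congr 1
    push_cast
    ring
  · have him : (i : ℤ) + 1 = m := by omega
    rw [← periodicExtend_apply (m := m) (i := 0) (by omega)]
    congr 1
    push_cast
    linear_combination him

lemma exists_eq_add_one_add_mul (hm : 0 < m) (a : ℤ) : ∃ i < m, ∃ k : ℤ, a = i + 1 + k * m := by
  have hm' : (0 : ℤ) < m := by omega
  have h0 := Int.emod_nonneg (a - 1) hm'.ne'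
  have h1 := Int.emod_lt_of_pos (a - 1) hm'
  refine ⟨((a - 1) % m).toNat, by omega, (a - 1) / m, ?_⟩
  have := Int.emod_add_mul_ediv (a - 1) m
  rw [Int.toNat_of_nonneg h0]
  linarith

lemma periodicExtend_add_period (hm : 0 < m) (a : ℤ) :
    periodicExtend m c v (a + m) = periodicExtend m c v a + c := by
  obtain ⟨i, hi, k, rfl⟩ := exists_eq_add_one_add_mul hm a
  rw [show (i : ℤ) + 1 + k * m + m = i + 1 + (k + 1) * m by ring, periodicExtend_apply hi,
    periodicExtend_apply hi]
  ring

lemma periodicExtend_antitone {ℓ : ℕ} (hm : 0 < m) (hv : isDom m ℓ v) :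
    Antitone (periodicExtend m (-ℓ) v) := antitone_int_of_succ_le fun a => by
  obtain ⟨i, hi, k, rfl⟩ := exists_eq_add_one_add_mul hm a
  rw [periodicExtend_add_one hi, periodicExtend_apply hi]
  split_ifs with h
  · linarith [hv.1 i (i + 1) (by omega) h]
  · have := hv.2
    rw [show m - 1 = i by omega] at this
    linarith

lemma periodicExtend_omegaMap {ℓ : ℕ} (hm : 0 < m) (v : ℕ → ℤ) (a : ℤ) :
    periodicExtend m (-ℓ) (omegaMap m ℓ v) (a + 1) = periodicExtend m (-ℓ) v a + 1 := by
  obtain ⟨i, hi, k, rfl⟩ := exists_eq_add_one_add_mul hm a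
  rw [periodicExtend_add_one hi, periodicExtend_apply hi]
  split_ifs with h
  · rw [omegaMap, if_neg (by omega), Nat.add_sub_cancel]
    ring
  · rw [omegaMap, if_pos rfl, show m - 1 = i by omega]
    ring

lemma periodicExtend_omegaMap_iterate {ℓ : ℕ} (hm : 0 < m) (v : ℕ → ℤ) (s : ℕ) (a : ℤ) :
    periodicExtend m (-ℓ) ((omegaMap m ℓ)^[s] v) a = periodicExtend m (-ℓ) v (a - s) + s := by
  induction s generalizing a with
  | zero => simp
  | succ s ih =>
    rw [iterate_succ_apply', ← sub_add_cancel a 1, periodicExtend_omegaMap hm, ih]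
    push_cast
    ring_nf

end periodicExtend

section hatD

variable {m ℓ : ℕ} {v w v' w' : ℕ → ℤ}

lemma mem_hatD_iff_s19 (hm : 0 < m) {p : ℤ × ℤ} :
    p ∈ hatD m ℓ v w ↔ periodicExtend m (-ℓ) w p.1 < p.2 ∧ p.2 ≤ periodicExtend m (-ℓ) v p.1 := by
  constructor
  · rintro ⟨k, i, hi, hp, hlo, hhi⟩
    rw [hp, periodicExtend_apply hi, periodicExtend_apply hi]
    constructor <;> linarith
  · intro h
    obtain ⟨i, hi, k, hp⟩ := exists_eq_add_one_add_mul hm p.1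
    rw [hp, periodicExtend_apply hi, periodicExtend_apply hi] at h
    exact ⟨k, i, hi, hp, by linarith, by linarith⟩

lemma hatD_congr (h : ∀ i < m, v i = v' i ∧ w i = w' i) : hatD m ℓ v w = hatD m ℓ v' w' :=
  Set.ext fun _ => exists_congr fun _ => exists_congr fun i =>
    and_congr_right fun hi => by rw [(h i hi).1, (h i hi).2]

lemma eq_of_hatD_eq (hm : 0 < m) (hvw : ∀ i < m, w i < v i)
    (h : hatD m ℓ v w = hatD m ℓ v' w') : ∀ i < m, v i = v' i ∧ w i = w' i := by
  intro i hi
  have hrow : Ioc (w i) (v i) = Ioc (w' i) (v' i) := by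
    ext b
    have := congrArg (((i : ℤ) + 1, b) ∈ ·) h
    simpa only [mem_hatD_iff_s19 hm, periodicExtend_natCast_add_one hi, eq_iff_iff, mem_Ioc] using this
  exact ((Ioc_eq_Ioc_iff (.inl (hvw i hi))).1 hrow).symm

lemma add_period_mem_hatD (hm : 0 < m) {p : ℤ × ℤ} (hp : p ∈ hatD m ℓ v w) :
    p + ((m : ℤ), -(ℓ : ℤ)) ∈ hatD m ℓ v w := by
  rw [mem_hatD_iff_s19 hm] at hp ⊢
  simp only [Prod.fst_add, Prod.snd_add, periodicExtend_add_period hm]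
  omega

lemma hatD_omegaMap_iterate (hm : 0 < m) (v w : ℕ → ℤ) (s : ℕ) :
    hatD m ℓ ((omegaMap m ℓ)^[s] v) ((omegaMap m ℓ)^[s] w) =
      (· + ((s : ℤ), (s : ℤ))) '' hatD m ℓ v w := by
  ext p
  simp only [image_add_right, mem_preimage, mem_hatD_iff_s19 hm, periodicExtend_omegaMap_iterate hm,
    Prod.fst_add, Prod.snd_add, Prod.neg_mk, ← sub_eq_add_neg]
  omega

end hatD

section tableaux

variable {n m ℓ : ℕ} {lam mu : ℕ → ℤ} {Λ Λ' : Set (ℤ × ℤ)} {T : ℤ × ℤ → ℤ} {C : ℤ → ℤ}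

lemma exists_isContent (hT : InjOn T Λ) : ∃ C, IsContent Λ T C :=
  ⟨fun t => (invFunOn T Λ t).2 - (invFunOn T Λ t).1, fun u hu => by
    simp only [hT.leftInvOn_invFunOn hu]⟩

lemma content_add_of_isTab (hT : IsTab n m ℓ Λ T) (hC : IsContent Λ T C)
    (hΛ : ∀ p ∈ Λ, p + ((m : ℤ), -(ℓ : ℤ)) ∈ Λ) (t : ℤ) : C (t + n) = C t - (m + ℓ) := by
  obtain ⟨u, hu, rfl⟩ := hT.1.surjOn (mem_univ t)
  rw [← hT.2 u hu, hC _ (hΛ u hu), hC u hu, Prod.fst_add, Prod.snd_add]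
  ring

lemma isStdTab_isContent_comp_add {r : ℤ} (hΛ : Λ = (· + (r, r)) '' Λ')
    (hT : IsStdTab n m ℓ Λ T) (hC : IsContent Λ T C) :
    IsStdTab n m ℓ Λ' (fun u => T (u + (r, r))) ∧ IsContent Λ' (fun u => T (u + (r, r))) C := by
  subst hΛ
  have hmem : ∀ u, u + (r, r) ∈ (· + (r, r)) '' Λ' ↔ u ∈ Λ' := fun _ =>
    (add_left_injective _).mem_set_image
  refine ⟨⟨⟨hT.1.1.comp (add_left_injective _).injOn.bijOn_image, fun u hu => ?_⟩,
    fun a b ha hb => ?_, fun a b ha hb => ?_⟩, fun u hu => ?_⟩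
  · simp only
    rw [add_right_comm, hT.1.2 _ ((hmem u).2 hu)]
  · have := (hmem _).2 hb
    simp only [Prod.mk_add_mk, add_right_comm b 1 r] at this ⊢
    exact hT.2.1 _ _ ((hmem _).2 ha) this
  · have := (hmem _).2 hb
    simp only [Prod.mk_add_mk, add_right_comm a 1 r] at this ⊢
    exact hT.2.2 _ _ ((hmem _).2 ha) this
  · simp only
    rw [hC _ ((hmem u).2 hu), Prod.fst_add, Prod.snd_add]
    ring

def toSkewDiagram (h : memJstar n m ℓ lam mu) : SkewDiagram where
  inner := periodicExtend m (-ℓ) mu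
  outer := periodicExtend m (-ℓ) lam
  antitone_inner := periodicExtend_antitone h.1 h.2.2.1
  antitone_outer := periodicExtend_antitone h.1 h.2.1
  inner_lt_outer a := by
    obtain ⟨i, hi, k, rfl⟩ := exists_eq_add_one_add_mul h.1 a
    rw [periodicExtend_apply hi, periodicExtend_apply hi]
    linarith [h.2.2.2.1 i hi]

lemma cells_toSkewDiagram (h : memJstar n m ℓ lam mu) :
    (toSkewDiagram h).cells = hatD m ℓ lam mu :=
  Set.ext fun _ => (mem_hatD_iff_s19 h.1).symm

lemma isStdFilling_toSkewDiagram (h : memJstar n m ℓ lam mu)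
    (hT : IsStdTab n m ℓ (hatD m ℓ lam mu) T) (hC : IsContent (hatD m ℓ lam mu) T C) :
    (toSkewDiagram h).IsStdFilling T C := by
  rw [← cells_toSkewDiagram h] at hT hC
  exact ⟨hT.1.1, hT.2.1, hT.2.2, hC⟩

lemma exists_isStdTab_isContent (h : memJstar n m ℓ lam mu) :
    ∃ T C, IsStdTab n m ℓ (hatD m ℓ lam mu) T ∧ IsContent (hatD m ℓ lam mu) T C := by
  set E := toSkewDiagram h
  set σ := periodicExtend m n fun i => ∑ j ∈ Finset.range i, (lam j - mu j)
  have hσ : ∀ a, σ (a + 1) = σ a + (E.outer a - E.inner a) := fun a => by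
    obtain ⟨i, hi, k, rfl⟩ := exists_eq_add_one_add_mul h.1 a
    simp only [σ, E, toSkewDiagram]
    rw [periodicExtend_add_one hi, periodicExtend_apply hi, periodicExtend_apply hi,
      periodicExtend_apply hi]
    split_ifs with hi1
    · rw [Finset.sum_range_succ]
      ring
    · have := h.2.2.2.2
      rw [show m = i + 1 by omega, Finset.sum_range_succ] at this
      simp only [Finset.range_zero, Finset.sum_empty]
      linarith
  have hbij := E.readingFilling_bijOn hσ
  obtain ⟨C, hC⟩ := exists_isContent hbij.injOn
  rw [← cells_toSkewDiagram h]
  refine ⟨E.readingFilling σ, C, ⟨⟨hbij, fun u _ => ?_⟩, SkewDiagram.readingFilling_rowInc,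
    SkewDiagram.readingFilling_colInc hσ⟩, hC⟩
  simp only [SkewDiagram.readingFilling, E, σ, toSkewDiagram, Prod.fst_add, Prod.snd_add,
    periodicExtend_add_period h.1]
  ring

end tableaux

section equivalences

variable {n m m' ℓ ℓ' : ℕ} {lam mu eta nu : ℕ → ℤ}

lemma eq_image_add_of_isContent (h1 : memJstar n m ℓ lam mu) (h2 : memJstar n m' ℓ' eta nu)
    {T S : ℤ × ℤ → ℤ} {C : ℤ → ℤ}
    (hT : IsStdTab n m ℓ (hatD m ℓ lam mu) T) (hS : IsStdTab n m' ℓ' (hatD m' ℓ' eta nu) S)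
    (hCT : IsContent (hatD m ℓ lam mu) T C) (hCS : IsContent (hatD m' ℓ' eta nu) S C) :
    m = m' ∧ ℓ = ℓ' ∧ ∃ r : ℤ,
      hatD m ℓ lam mu = (fun u : ℤ × ℤ => u + (r, r)) '' hatD m' ℓ' eta nu := by
  set F := toSkewDiagram h1
  obtain ⟨r, hr⟩ := SkewDiagram.exists_cells_eq_image_add (isStdFilling_toSkewDiagram h2 hS hCS)
    (isStdFilling_toSkewDiagram h1 hT hCT)
  have hsum : (m + ℓ : ℤ) = m' + ℓ' := by
    have := content_add_of_isTab hT.1 hCT (fun _ => add_period_mem_hatD h1.1) 0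
    have := content_add_of_isTab hS.1 hCS (fun _ => add_period_mem_hatD h2.1) 0
    linarith
  have hper : F.outer m = F.outer 0 - ℓ := by
    show periodicExtend m (-ℓ) lam m = periodicExtend m (-ℓ) lam 0 - ℓ
    simpa [sub_eq_add_neg] using periodicExtend_add_period (c := -ℓ) (v := lam) h1.1 0
  have hper' : F.outer m' = F.outer 0 - ℓ' := by
    rw [SkewDiagram.outer_eq_of_cells_eq_image_add hr,
      SkewDiagram.outer_eq_of_cells_eq_image_add hr, show (m' : ℤ) - r = 0 - r + m' by ring]
    simp only [toSkewDiagram, periodicExtend_add_period h2.1]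
    ring
  have hmm : m = m' := by
    rcases le_total m m' with hle | hle
    · have := F.antitone_outer (show (m : ℤ) ≤ m' by omega)
      omega
    · have := F.antitone_outer (show (m' : ℤ) ≤ m by omega)
      omega
  refine ⟨hmm, by omega, r, ?_⟩
  rwa [← cells_toSkewDiagram h1, ← cells_toSkewDiagram h2]

lemma exists_isContent_of_eq_image_add (h1 : memJstar n m ℓ lam mu) {r : ℤ}
    (hr : hatD m ℓ lam mu = (fun u : ℤ × ℤ => u + (r, r)) '' hatD m ℓ eta nu) :
    ∃ (T S : ℤ × ℤ → ℤ) (C : ℤ → ℤ),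
      IsStdTab n m ℓ (hatD m ℓ lam mu) T ∧ IsStdTab n m ℓ (hatD m ℓ eta nu) S ∧
      IsContent (hatD m ℓ lam mu) T C ∧ IsContent (hatD m ℓ eta nu) S C := by
  obtain ⟨T, C, hT, hC⟩ := exists_isStdTab_isContent h1
  obtain ⟨hS, hCS⟩ := isStdTab_isContent_comp_add hr hT hC
  exact ⟨T, _, C, hT, hS, hC, hCS⟩

lemma exists_omegaMap_iterate_of_eq_image_add (h1 : memJstar n m ℓ lam mu)
    (h2 : memJstar n m ℓ eta nu) {r : ℤ}
    (hr : hatD m ℓ lam mu = (fun u : ℤ × ℤ => u + (r, r)) '' hatD m ℓ eta nu) :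
    ∃ s : ℕ, ((∀ i < m, eta i = (omegaMap m ℓ)^[s] lam i ∧ nu i = (omegaMap m ℓ)^[s] mu i) ∨
      (∀ i < m, lam i = (omegaMap m ℓ)^[s] eta i ∧ mu i = (omegaMap m ℓ)^[s] nu i)) := by
  rcases le_total 0 r with hr0 | hr0
  · lift r to ℕ using hr0
    refine ⟨r, .inr (eq_of_hatD_eq (ℓ := ℓ) h1.1 h1.2.2.2.1 ?_)⟩
    rw [hatD_omegaMap_iterate h1.1, hr]
  · obtain ⟨s, rfl⟩ : ∃ s : ℕ, r = -s := ⟨(-r).toNat, by omega⟩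
    refine ⟨s, .inl (eq_of_hatD_eq (ℓ := ℓ) h2.1 h2.2.2.2.1 ?_)⟩
    rw [hatD_omegaMap_iterate h2.1, hr, image_image]
    simp only [← Prod.neg_mk, neg_add_cancel_right, image_id']

lemma exists_eq_image_add_of_omegaMap_iterate (hm : 0 < m) {s : ℕ}
    (hs : (∀ i < m, eta i = (omegaMap m ℓ)^[s] lam i ∧ nu i = (omegaMap m ℓ)^[s] mu i) ∨
      (∀ i < m, lam i = (omegaMap m ℓ)^[s] eta i ∧ mu i = (omegaMap m ℓ)^[s] nu i)) :
    ∃ r : ℤ, hatD m ℓ lam mu = (fun u : ℤ × ℤ => u + (r, r)) '' hatD m ℓ eta nu := by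
  rcases hs with hs | hs
  · refine ⟨-s, ?_⟩
    rw [hatD_congr hs, hatD_omegaMap_iterate hm, image_image]
    simp only [← Prod.neg_mk, add_neg_cancel_right, image_id']
  · exact ⟨s, by rw [hatD_congr hs, hatD_omegaMap_iterate hm]⟩

end equivalences

theorem diagonal_shift_equiv_general (n m m' ℓ ℓ' : ℕ)
    (lam mu eta nu : ℕ → ℤ)
    (h1 : memJstar n m ℓ lam mu) (h2 : memJstar n m' ℓ' eta nu) :
    ((∃ (T S : ℤ × ℤ → ℤ) (C : ℤ → ℤ),
        IsStdTab n m ℓ (hatD m ℓ lam mu) T ∧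
        IsStdTab n m' ℓ' (hatD m' ℓ' eta nu) S ∧
        IsContent (hatD m ℓ lam mu) T C ∧ IsContent (hatD m' ℓ' eta nu) S C) ↔
      (m = m' ∧ ℓ = ℓ' ∧ ∃ r : ℤ,
        hatD m ℓ lam mu = (fun u : ℤ × ℤ => u + (r, r)) '' hatD m' ℓ' eta nu)) ∧
    ((m = m' ∧ ℓ = ℓ' ∧ ∃ r : ℤ,
        hatD m ℓ lam mu = (fun u : ℤ × ℤ => u + (r, r)) '' hatD m' ℓ' eta nu) ↔
      (m = m' ∧ ℓ = ℓ' ∧ ∃ r : ℕ,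
        ((∀ i < m, eta i = (omegaMap m ℓ)^[r] lam i ∧
            nu i = (omegaMap m ℓ)^[r] mu i) ∨
         (∀ i < m, lam i = (omegaMap m ℓ)^[r] eta i ∧
            mu i = (omegaMap m ℓ)^[r] nu i)))) := by
  refine ⟨⟨fun ⟨T, S, C, hT, hS, hCT, hCS⟩ => eq_image_add_of_isContent h1 h2 hT hS hCT hCS, ?_⟩,
    ⟨?_, ?_⟩⟩
  · rintro ⟨rfl, rfl, r, hr⟩
    exact exists_isContent_of_eq_image_add h1 hr
  · rintro ⟨rfl, rfl, r, hr⟩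
    exact ⟨rfl, rfl, exists_omegaMap_iterate_of_eq_image_add h1 h2 hr⟩
  · rintro ⟨rfl, rfl, s, hs⟩
    exact ⟨rfl, rfl, exists_eq_image_add_of_omegaMap_iterate h1.1 hs⟩

/-- for `(λ,μ) ∈ 𝒥*_{m,ℓ}` and `(η,ν) ∈ 𝒥*_{m',ℓ'}`, the
following are equivalent: (a) some standard tableaux on `λ/μ^` and `η/ν^` have
the same content function; (b) `m = m'`, `ℓ = ℓ'`, and `λ/μ^ = η/ν^ + (r,r)`
for some `r ∈ ℤ`; (c) `m = m'`, `ℓ = ℓ'`, and `(η,ν) = ω_m^r · (λ,μ)` for some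
`r ∈ ℤ` (equivalently, one pair is a nonnegative `ω_m`-power of the other). -/
theorem diagonal_shift_equiv (n m m' ℓ ℓ' : ℕ) (hn : 2 ≤ n)
    (lam mu eta nu : ℕ → ℤ)
    (h1 : memJstar n m ℓ lam mu) (h2 : memJstar n m' ℓ' eta nu) :
    ((∃ (T S : ℤ × ℤ → ℤ) (C : ℤ → ℤ),
        IsStdTab n m ℓ (hatD m ℓ lam mu) T ∧
        IsStdTab n m' ℓ' (hatD m' ℓ' eta nu) S ∧
        IsContent (hatD m ℓ lam mu) T C ∧ IsContent (hatD m' ℓ' eta nu) S C) ↔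
      (m = m' ∧ ℓ = ℓ' ∧ ∃ r : ℤ,
        hatD m ℓ lam mu = (fun u : ℤ × ℤ => u + (r, r)) '' hatD m' ℓ' eta nu)) ∧
    ((m = m' ∧ ℓ = ℓ' ∧ ∃ r : ℤ,
        hatD m ℓ lam mu = (fun u : ℤ × ℤ => u + (r, r)) '' hatD m' ℓ' eta nu) ↔
      (m = m' ∧ ℓ = ℓ' ∧ ∃ r : ℕ,
        ((∀ i < m, eta i = (omegaMap m ℓ)^[r] lam i ∧
            nu i = (omegaMap m ℓ)^[r] mu i) ∨
         (∀ i < m, lam i = (omegaMap m ℓ)^[r] eta i ∧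
            mu i = (omegaMap m ℓ)^[r] nu i)))) :=
  diagonal_shift_equiv_general n m m' ℓ ℓ' lam mu eta nu h1 h2
end
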